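/- In a stepdown procedure applied to the 2n hypotheses with P_{n+i} = 1 − P_i, if all n false nulls are among the rejected hypotheses (J = n rejections among false nulls at their critical values), and the critical values satisfy α_i < 1/2 for all i, then the event that some true null is falsely rejected is the union over subsets S ⊆ I₁ of the events {K = S, min over true nulls not paired with S of P_i ≤ α_{|S|+1}}, where K denotes the set of false nulls rejected by the stepdown procedure restricted to the false nulls. -/

import Mathlib

/-!
The count of the `2n` p-values at most `α_j` is `T_j + N_j`, where `T` counts true and `N` false
nulls. Let `J` be the stepdown index of `N` alone. If `J = n`, every `1 - P_i ≤ α_n < 1/2`, so no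
`P_i` is at most a critical value. Otherwise `N_J = J = |K|` and `N_{J+1} ≤ J`, so the full
procedure gets past step `J` exactly when `T_{J+1} ≥ 1`, i.e. when some `P_i ≤ α_{|K|+1}`; as all
critical values are below `1/2`, such an `i` is never paired with a member of `K`.
-/

open Finset
open scoped Classical

-- The number of rejections of the stepdown procedure when `C j` p-values are at most `α_j`.
noncomputable def stepdownIndex (n : ℕ) (C : ℕ → ℕ) : ℕ :=
  (range (n + 1)).sup fun i => if ∀ j ∈ Icc 1 i, j ≤ C j then i else 0

section StepdownIndex

variable {n : ℕ} {C : ℕ → ℕ}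

theorem le_stepdownIndex_iff {i : ℕ} :
    i ≤ stepdownIndex n C ↔ i ≤ n ∧ ∀ j ∈ Icc 1 i, j ≤ C j := by
  constructor
  · intro hi
    rcases Nat.eq_zero_or_pos i with rfl | hpos
    · simp
    obtain ⟨b, hb, hib⟩ := (Finset.le_sup_iff hpos).1 hi
    split_ifs at hib with hC
    · refine ⟨by simp at hb; omega, fun j hj => hC j ?_⟩
      simp only [mem_Icc] at hj ⊢
      omega
    · omega
  · rintro ⟨hin, hC⟩
    exact le_sup_of_le (f := fun i => if ∀ j ∈ Icc 1 i, j ≤ C j then i else 0)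
      (mem_range.2 (Nat.lt_succ_of_le hin)) (by simp only [if_pos hC, le_refl])

theorem stepdownIndex_le : stepdownIndex n C ≤ n :=
  (le_stepdownIndex_iff.1 le_rfl).1

theorem le_apply_of_le_stepdownIndex {j : ℕ} (hj : 1 ≤ j) (hjs : j ≤ stepdownIndex n C) :
    j ≤ C j :=
  (le_stepdownIndex_iff.1 le_rfl).2 j (mem_Icc.2 ⟨hj, hjs⟩)

theorem apply_succ_stepdownIndex_lt (hs : stepdownIndex n C < n) :
    C (stepdownIndex n C + 1) < stepdownIndex n C + 1 := by
  by_contra! hC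
  have : stepdownIndex n C + 1 ≤ stepdownIndex n C := by
    refine le_stepdownIndex_iff.2 ⟨hs, fun j hj => ?_⟩
    obtain ⟨hj1, hj2⟩ := mem_Icc.1 hj
    rcases Nat.lt_or_eq_of_le hj2 with hlt | rfl
    · exact le_apply_of_le_stepdownIndex hj1 (Nat.le_of_lt_succ hlt)
    · exact hC
  omega

theorem apply_stepdownIndex_eq (hC : MonotoneOn C (Icc 1 n)) (hCn : C n ≤ n)
    (hs : 1 ≤ stepdownIndex n C) : C (stepdownIndex n C) = stepdownIndex n C := by
  refine le_antisymm ?_ (le_apply_of_le_stepdownIndex hs le_rfl)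
  rcases stepdownIndex_le.lt_or_eq with hlt | heq
  · have hmono : C (stepdownIndex n C) ≤ C (stepdownIndex n C + 1) :=
      hC (mem_Icc.2 ⟨hs, hlt.le⟩) (mem_Icc.2 ⟨by omega, hlt⟩) (Nat.le_succ _)
    have := apply_succ_stepdownIndex_lt hlt
    omega
  · rwa [heq]

theorem succ_stepdownIndex_le_stepdownIndex_add_iff {T : ℕ → ℕ} (hC : MonotoneOn C (Icc 1 n))
    (hs : stepdownIndex n C < n) :
    stepdownIndex n C + 1 ≤ stepdownIndex n (fun j => T j + C j) ↔
      1 ≤ T (stepdownIndex n C + 1) := by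
  have hCs : C (stepdownIndex n C + 1) < stepdownIndex n C + 1 := apply_succ_stepdownIndex_lt hs
  set s := stepdownIndex n C
  constructor
  · intro h
    have hsum := le_apply_of_le_stepdownIndex (Nat.le_add_left 1 s) h
    omega
  · intro hT
    refine le_stepdownIndex_iff.2 ⟨hs, fun j hj => ?_⟩
    obtain ⟨hj1, hj2⟩ := mem_Icc.1 hj
    rcases Nat.lt_or_eq_of_le hj2 with hlt | rfl
    · have := le_apply_of_le_stepdownIndex hj1 (Nat.le_of_lt_succ hlt)
      omega
    · rcases Nat.eq_zero_or_pos s with hs0 | hs1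
      · omega
      · have hCs := le_apply_of_le_stepdownIndex hs1 le_rfl
        have hmono : C s ≤ C (s + 1) :=
          hC (mem_Icc.2 ⟨hs1, hs.le⟩) (mem_Icc.2 ⟨by omega, hs⟩) (Nat.le_succ _)
        omega

end StepdownIndex

noncomputable def rejCount {ι : Type*} [Fintype ι] (p : ι → ℝ) (crit : ℕ → ℝ) (j : ℕ) : ℕ :=
  #{k | p k ≤ crit j}

section RejCount

variable {ι κ : Type*} [Fintype ι] [Fintype κ] (p : ι → ℝ) (crit : ℕ → ℝ)

theorem rejCount_monotoneOn {s : Set ℕ} (h : MonotoneOn crit s) :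
    MonotoneOn (rejCount p crit) s := fun _ hj _ hk hjk =>
  card_le_card fun _ hx => by
    simp only [mem_filter, mem_univ, true_and] at hx ⊢
    exact hx.trans (h hj hk hjk)

theorem one_le_rejCount_iff {j : ℕ} : 1 ≤ rejCount p crit j ↔ ∃ k, p k ≤ crit j := by
  simp [rejCount, Nat.one_le_iff_ne_zero]

theorem rejCount_le_card (j : ℕ) : rejCount p crit j ≤ Fintype.card ι :=
  card_filter_le _ _

theorem rejCount_sumElim (q : κ → ℝ) (j : ℕ) :
    rejCount (Sum.elim p q) crit j = rejCount p crit j + rejCount q crit j := by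
  simp only [rejCount, card_filter, Fintype.sum_sum_type, Sum.elim_inl, Sum.elim_inr]
  rfl

theorem exists_le_crit_stepdownIndex_sumElim_iff {n : ℕ} (q : κ → ℝ)
    (hmono : MonotoneOn crit (Icc 1 n)) (hs : stepdownIndex n (rejCount q crit) < n) :
    (∃ i, 1 ≤ stepdownIndex n (rejCount (Sum.elim p q) crit) ∧
        p i ≤ crit (stepdownIndex n (rejCount (Sum.elim p q) crit))) ↔
      ∃ i, p i ≤ crit (stepdownIndex n (rejCount q crit) + 1) := by
  set J := stepdownIndex n (rejCount q crit)
  have hsucc : J + 1 ≤ stepdownIndex n (rejCount (Sum.elim p q) crit) ↔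
      ∃ i, p i ≤ crit (J + 1) := by
    rw [funext (rejCount_sumElim p crit q), succ_stepdownIndex_le_stepdownIndex_add_iff
      (rejCount_monotoneOn q crit hmono) hs, one_le_rejCount_iff]
  set I := stepdownIndex n (rejCount (Sum.elim p q) crit)
  have hIn : I ≤ n := stepdownIndex_le
  constructor
  · rintro ⟨i, hI, hi⟩
    by_cases hIJ : I ≤ J + 1
    · exact ⟨i, hi.trans (hmono (mem_Icc.2 ⟨hI, hIn⟩) (mem_Icc.2 ⟨by omega, hs⟩) hIJ)⟩
    · exact hsucc.1 (by omega)
  · rintro ⟨i, hi⟩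
    have hJI := hsucc.2 ⟨i, hi⟩
    exact ⟨i, by omega, hi.trans (hmono (mem_Icc.2 ⟨by omega, hs⟩) (mem_Icc.2 ⟨by omega, hIn⟩) hJI)⟩

end RejCount

noncomputable def rejectionSet (n : ℕ) (crit : ℕ → ℝ) (q : Fin n → ℝ) : Finset (Fin n) :=
  {k | 1 ≤ stepdownIndex n (rejCount q crit) ∧ q k ≤ crit (stepdownIndex n (rejCount q crit))}

section Stepdown

variable {n : ℕ} {crit : ℕ → ℝ} (p : Fin n → ℝ)

theorem card_rejectionSet (hmono : MonotoneOn crit (Icc 1 n)) :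
    #(rejectionSet n crit p) = stepdownIndex n (rejCount p crit) := by
  rcases Nat.eq_zero_or_pos (stepdownIndex n (rejCount p crit)) with hs | hs
  · simp [rejectionSet, hs]
  · have hle : rejCount p crit n ≤ n := by simpa using rejCount_le_card p crit n
    rw [← apply_stepdownIndex_eq (rejCount_monotoneOn p crit hmono) hle hs]
    simp [rejectionSet, rejCount, Nat.one_le_iff_ne_zero.2 hs.ne']

theorem rejectionSet_eq_univ_of_stepdownIndex_eq (hmono : MonotoneOn crit (Icc 1 n))
    (hs : stepdownIndex n (rejCount p crit) = n) : rejectionSet n crit p = univ :=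
  eq_univ_of_card _ (by rw [card_rejectionSet p hmono, hs, Fintype.card_fin])

theorem notMem_rejectionSet_one_sub_of_le (hhalf : ∀ j ∈ Icc 1 n, crit j < 1 / 2) {i : Fin n}
    {j : ℕ} (hj : j ∈ Icc 1 n) (hi : p i ≤ crit j) :
    i ∉ rejectionSet n crit (fun k => 1 - p k) := by
  intro hmem
  simp only [rejectionSet, mem_filter, mem_univ, true_and] at hmem
  have := hhalf _ (mem_Icc.2 ⟨hmem.1, stepdownIndex_le⟩)
  have := hhalf j hj
  linarith

theorem exists_le_crit_stepdownIndex_iff_exists_notMem_rejectionSet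
    (hmono : MonotoneOn crit (Icc 1 n)) (hhalf : ∀ j ∈ Icc 1 n, crit j < 1 / 2) :
    (∃ i, 1 ≤ stepdownIndex n (rejCount (Sum.elim p fun k => 1 - p k) crit) ∧
        p i ≤ crit (stepdownIndex n (rejCount (Sum.elim p fun k => 1 - p k) crit))) ↔
      ∃ i ∉ rejectionSet n crit (fun k => 1 - p k),
        p i ≤ crit (#(rejectionSet n crit (fun k => 1 - p k)) + 1) := by
  rw [card_rejectionSet _ hmono]
  rcases (stepdownIndex_le (C := rejCount (fun k => 1 - p k) crit)).lt_or_eq with hs | hs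
  · rw [exists_le_crit_stepdownIndex_sumElim_iff p crit _ hmono hs]
    exact ⟨fun ⟨i, hi⟩ => ⟨i, notMem_rejectionSet_one_sub_of_le p hhalf
      (mem_Icc.2 ⟨by omega, hs⟩) hi, hi⟩, fun ⟨i, _, hi⟩ => ⟨i, hi⟩⟩
  · have huniv := rejectionSet_eq_univ_of_stepdownIndex_eq _ hmono hs
    simp only [huniv, mem_univ, not_true_eq_false, false_and, exists_false, iff_false,
      not_exists, not_and]
    intro i hI hi
    exact notMem_rejectionSet_one_sub_of_le p hhalf (mem_Icc.2 ⟨hI, stepdownIndex_le⟩) hi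
      (huniv ▸ mem_univ i)

end Stepdown

theorem stepdown_directional_error_event_decomposition_general
    {Ω : Type*} (n : ℕ)
    (P : Fin n → Ω → ℝ)
    (pval : (Fin n ⊕ Fin n) → Ω → ℝ)
    (hpvalT : ∀ i, pval (Sum.inl i) = P i)
    (hpvalF : ∀ i ω, pval (Sum.inr i) ω = 1 - P i ω)
    (crit : ℕ → ℝ)
    (hmono : ∀ j k, 1 ≤ j → j ≤ k → k ≤ n → crit j ≤ crit k)
    (hhalf : ∀ j, 1 ≤ j → j ≤ n → crit j < 1 / 2)
    -- i* of the stepdown procedure applied to all 2n p-values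
    (istar : Ω → ℕ)
    (histar : ∀ ω, istar ω = (Finset.range (n + 1)).sup (fun i =>
      if ∀ j ∈ Finset.Icc 1 i,
          j ≤ (Finset.univ.filter
            (fun k : Fin n ⊕ Fin n => pval k ω ≤ crit j)).card
        then i else 0))
    -- J = number of rejections of the stepdown procedure run only on the n
    -- false null p-values 1 − Pₖ
    (J : Ω → ℕ)
    (hJ : ∀ ω, J ω = (Finset.range (n + 1)).sup (fun i =>
      if ∀ j ∈ Finset.Icc 1 i,
          j ≤ (Finset.univ.filter
            (fun k : Fin n => 1 - P k ω ≤ crit j)).card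
        then i else 0))
    -- K = the corresponding rejection set among the false nulls
    (K : Ω → Finset (Fin n))
    (hK : ∀ ω, K ω = Finset.univ.filter
      (fun k : Fin n => 1 ≤ J ω ∧ 1 - P k ω ≤ crit (J ω))) :
    {ω | ∃ i : Fin n, 1 ≤ istar ω ∧ P i ω ≤ crit (istar ω)} =
      ⋃ S : Finset (Fin n),
        {ω | K ω = S ∧ ∃ i ∈ Finset.univ \ S, P i ω ≤ crit (S.card + 1)} := by
  have hmono' : MonotoneOn crit (Icc 1 n) := fun j hj k hk hjk =>
    hmono j k (mem_Icc.1 hj).1 hjk (mem_Icc.1 hk).2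
  have hhalf' : ∀ j ∈ Icc 1 n, crit j < 1 / 2 := fun j hj =>
    hhalf j (mem_Icc.1 hj).1 (mem_Icc.1 hj).2
  ext ω
  have hpval : (fun k => pval k ω) = Sum.elim (fun i => P i ω) fun i => 1 - P i ω := by
    funext k
    cases k with
    | inl i => simp [hpvalT]
    | inr i => simp [hpvalF]
  have hKω : K ω = rejectionSet n crit (fun k => 1 - P k ω) := by
    rw [hK ω, hJ ω]; rfl
  have histarω : istar ω =
      stepdownIndex n (rejCount (Sum.elim (fun i => P i ω) fun i => 1 - P i ω) crit) := by
    rw [histar ω, ← hpval]; rfl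
  simp only [Set.mem_ofPred_eq, Set.mem_iUnion, exists_eq_left', mem_sdiff, mem_univ, true_and]
  rw [histarω, hKω]
  exact exists_le_crit_stepdownIndex_iff_exists_notMem_rejectionSet _ hmono' hhalf'

/-- For a stepdown procedure with critical constants
α₁ ≤ … ≤ αₙ < 1/2 applied to the 2n p-values (true nulls Pᵢ, false nulls
1 − Pᵢ), the event E₁ that some true null is falsely rejected equals the union
over subsets S ⊆ I₁ of the events {K = S, min_{i ∈ S̄₋ₙ} Pᵢ ≤ α_{|S|+1}},
where K is the rejection set of the stepdown procedure run only on the false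
null p-values and S̄₋ₙ indexes the true nulls not paired with S. -/
theorem stepdown_directional_error_event_decomposition
    {Ω : Type*} (n : ℕ) (hn : 1 ≤ n)
    (P : Fin n → Ω → ℝ)
    (hrange : ∀ i ω, 0 ≤ P i ω ∧ P i ω ≤ 1)
    (pval : (Fin n ⊕ Fin n) → Ω → ℝ)
    (hpvalT : ∀ i, pval (Sum.inl i) = P i)
    (hpvalF : ∀ i ω, pval (Sum.inr i) ω = 1 - P i ω)
    (crit : ℕ → ℝ)
    (hmono : ∀ j k, 1 ≤ j → j ≤ k → k ≤ n → crit j ≤ crit k)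
    (hpos : ∀ j, 1 ≤ j → j ≤ n → 0 < crit j)
    (hhalf : ∀ j, 1 ≤ j → j ≤ n → crit j < 1 / 2)
    -- i* of the stepdown procedure applied to all 2n p-values
    (istar : Ω → ℕ)
    (histar : ∀ ω, istar ω = (Finset.range (n + 1)).sup (fun i =>
      if ∀ j ∈ Finset.Icc 1 i,
          j ≤ (Finset.univ.filter
            (fun k : Fin n ⊕ Fin n => pval k ω ≤ crit j)).card
        then i else 0))
    -- J = number of rejections of the stepdown procedure run only on the n
    -- false null p-values 1 − Pₖ
    (J : Ω → ℕ)
    (hJ : ∀ ω, J ω = (Finset.range (n + 1)).sup (fun i =>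
      if ∀ j ∈ Finset.Icc 1 i,
          j ≤ (Finset.univ.filter
            (fun k : Fin n => 1 - P k ω ≤ crit j)).card
        then i else 0))
    -- K = the corresponding rejection set among the false nulls
    (K : Ω → Finset (Fin n))
    (hK : ∀ ω, K ω = Finset.univ.filter
      (fun k : Fin n => 1 ≤ J ω ∧ 1 - P k ω ≤ crit (J ω))) :
    {ω | ∃ i : Fin n, 1 ≤ istar ω ∧ P i ω ≤ crit (istar ω)} =
      ⋃ S : Finset (Fin n),
        {ω | K ω = S ∧ ∃ i ∈ Finset.univ \ S, P i ω ≤ crit (S.card + 1)} :=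
  stepdown_directional_error_event_decomposition_general n P pval hpvalT hpvalF crit hmono hhalf
    istar histar J hJ K hK
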